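/- Let ψ be a diffeomorphism of ℝⁿ with ψ(0) = 0 and Dψ(0) = Id. For 1 ≤ i,j,k,ℓ ≤ n, the derivative at 0 in the direction e_ℓ of the function x ↦ Σ_ν (Dψ(x)⁻¹)^i_ν · ∂_j∂_kψ^ν(x) equals ∂_ℓ∂_j∂_kψ^i(0) − Σ_ν ∂_ℓ∂_νψ^i(0) · ∂_j∂_kψ^ν(0). (In the paper's notation, η^i_{jkℓ}(ψ) = α^i_{jkℓ}(ψ) − Σ_ν α^i_{ℓν}(ψ)·α^ν_{jk}(ψ).) -/

import Mathlib

/-!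
Differentiate the sum term by term with the product rule. Since `Dψ(0) = Id` and the derivative
of `A ↦ A⁻¹` at the identity is `H ↦ -H`, the entry `(Dψ(x)⁻¹)^i_ν` has value `δ^i_ν` at `0` and
derivative `-∂_ℓ∂_νψ^i(0)` in the direction `e_ℓ`; the first fact collapses one half of the
product rule to `∂_ℓ∂ⱼ∂ₖψ^i(0)`, the second gives the correction term.
-/

noncomputable section

/-- A `C^∞` diffeomorphism of `ℝⁿ` (a bijective `C^∞` map with `C^∞` inverse). -/
structure Diffeo (n : ℕ) where
  toFun : (Fin n → ℝ) → (Fin n → ℝ)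
  invFun : (Fin n → ℝ) → (Fin n → ℝ)
  left_inv : Function.LeftInverse invFun toFun
  right_inv : Function.RightInverse invFun toFun
  smooth_toFun : ContDiff ℝ (⊤ : ℕ∞) toFun
  smooth_invFun : ContDiff ℝ (⊤ : ℕ∞) invFun

/-- Membership in the group `G` of invertible affine transformations of `ℝⁿ`:
maps `x ↦ A·x + b` with `A ∈ GL(n,ℝ)`, `b ∈ ℝⁿ`. -/
def IsAffineMap (n : ℕ) (f : (Fin n → ℝ) → (Fin n → ℝ)) : Prop :=
  ∃ A : Matrix (Fin n) (Fin n) ℝ, IsUnit A ∧ ∃ b : Fin n → ℝ, ∀ x, f x = A.mulVec x + b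

/-- Membership in the group `N` of diffeomorphisms `ψ` with `ψ(0) = 0` and `Dψ(0) = Id`. -/
def InN (n : ℕ) (ψ : Diffeo n) : Prop :=
  ψ.toFun 0 = 0 ∧ fderiv ℝ ψ.toFun 0 = ContinuousLinearMap.id ℝ (Fin n → ℝ)

/-- The Jacobian matrix of `f` at `x`: entry `(i,j)` is `∂ⱼ f^i (x)`. -/
def jacobianM (n : ℕ) (f : (Fin n → ℝ) → (Fin n → ℝ)) (x : Fin n → ℝ) :
    Matrix (Fin n) (Fin n) ℝ :=
  Matrix.of fun i j => fderiv ℝ f x (Pi.single j 1) i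

/-- The second-order partial derivative `∂ⱼ∂ₖ f^i (x)`. -/
def secondPartial (n : ℕ) (f : (Fin n → ℝ) → (Fin n → ℝ)) (i j k : Fin n)
    (x : Fin n → ℝ) : ℝ :=
  fderiv ℝ (fun z => fderiv ℝ f z (Pi.single k 1) i) x (Pi.single j 1)

open ContinuousLinearMap Function

theorem HasFDerivAt.ringInverse_of_eq_one {𝕜 E R : Type*} [NontriviallyNormedField 𝕜]
    [NormedAddCommGroup E] [NormedSpace 𝕜 E] [NormedRing R] [HasSummableGeomSeries R]
    [NormedAlgebra 𝕜 R] {f : E → R} {f' : E →L[𝕜] R} {x : E}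
    (hf : HasFDerivAt f f' x) (h1 : f x = 1) :
    HasFDerivAt (fun y => Ring.inverse (f y)) (-f') x := by
  have hinv : HasFDerivAt Ring.inverse (-mulLeftRight 𝕜 R 1 1) (f x) := by
    simpa [h1] using hasFDerivAt_ringInverse (𝕜 := 𝕜) (1 : Rˣ)
  refine (hinv.comp x hf).congr_fderiv ?_
  ext v
  simp

theorem isUnit_fderiv_of_leftInverse_of_rightInverse {𝕜 E : Type*} [NontriviallyNormedField 𝕜]
    [NormedAddCommGroup E] [NormedSpace 𝕜 E] {f g : E → E} {x : E}
    (hgf : LeftInverse g f) (hfg : RightInverse g f)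
    (hf : DifferentiableAt 𝕜 f x) (hg : DifferentiableAt 𝕜 g (f x)) :
    IsUnit (fderiv 𝕜 f x) := by
  have hgf' : HasFDerivAt (g ∘ f) ((fderiv 𝕜 g (f x)).comp (fderiv 𝕜 f x)) x :=
    hg.hasFDerivAt.comp x hf.hasFDerivAt
  have hf' : HasFDerivAt f (fderiv 𝕜 f x) (g (f x)) := by
    rw [hgf x]
    exact hf.hasFDerivAt
  have hfg' : HasFDerivAt (f ∘ g) ((fderiv 𝕜 f x).comp (fderiv 𝕜 g (f x))) (f x) :=
    hf'.comp (f x) hg.hasFDerivAt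
  rw [hgf.comp_eq_id] at hgf'
  rw [hfg.comp_eq_id] at hfg'
  exact isUnit_iff_exists.mpr
    ⟨_, ((hasFDerivAt_id _).unique hfg').symm, ((hasFDerivAt_id _).unique hgf').symm⟩

theorem Diffeo.isUnit_fderiv {n : ℕ} (ψ : Diffeo n) (x : Fin n → ℝ) :
    IsUnit (fderiv ℝ ψ.toFun x) :=
  isUnit_fderiv_of_leftInverse_of_rightInverse ψ.left_inv ψ.right_inv
    (ψ.smooth_toFun.differentiable (by simp) x) (ψ.smooth_invFun.differentiable (by simp) _)

section Coordinates

variable {n : ℕ} {f : (Fin n → ℝ) → (Fin n → ℝ)} {x : Fin n → ℝ}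

def matrixEntryCLM (i k : Fin n) : ((Fin n → ℝ) →L[ℝ] (Fin n → ℝ)) →L[ℝ] ℝ :=
  (proj i).comp (apply ℝ (Fin n → ℝ) (Pi.single k 1))

@[simp]
theorem matrixEntryCLM_apply (i k : Fin n) (A : (Fin n → ℝ) →L[ℝ] (Fin n → ℝ)) :
    matrixEntryCLM i k A = A (Pi.single k 1) i :=
  rfl

theorem jacobianM_eq_toMatrix' :
    jacobianM n f x = LinearMap.toMatrix' (fderiv ℝ f x : (Fin n → ℝ) →ₗ[ℝ] (Fin n → ℝ)) :=
  rfl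

theorem jacobianM_inv_apply (h : IsUnit (fderiv ℝ f x)) (i ν : Fin n) :
    (jacobianM n f x)⁻¹ i ν = Ring.inverse (fderiv ℝ f x) (Pi.single ν 1) i := by
  obtain ⟨u, hu⟩ := h
  have : (jacobianM n f x)⁻¹ =
      LinearMap.toMatrix' ((↑u⁻¹ : (Fin n → ℝ) →L[ℝ] (Fin n → ℝ)) : (Fin n → ℝ) →ₗ[ℝ] _) := by
    refine Matrix.inv_eq_right_inv ?_
    rw [jacobianM_eq_toMatrix', ← hu, ← LinearMap.toMatrix'_mul, ← toLinearMap_mul,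
      Units.mul_inv, one_def, coe_id, LinearMap.toMatrix'_id]
  rw [this, ← hu, Ring.inverse_unit]
  rfl

theorem secondPartial_eq_fderiv_fderiv (hf : DifferentiableAt ℝ (fderiv ℝ f) x) (i j k : Fin n) :
    secondPartial n f i j k x = fderiv ℝ (fderiv ℝ f) x (Pi.single j 1) (Pi.single k 1) i := by
  have h := ((matrixEntryCLM i k).hasFDerivAt.comp x hf.hasFDerivAt).fderiv
  exact congrArg (· (Pi.single j 1)) h

theorem ContDiff.secondPartial {m : WithTop ℕ∞} (hf : ContDiff ℝ (m + 2) f) (i j k : Fin n) :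
    ContDiff ℝ m (secondPartial n f i j k) := by
  have hfirst : ContDiff ℝ (m + 1) fun z => matrixEntryCLM i k (fderiv ℝ f z) :=
    (matrixEntryCLM i k).contDiff.comp (hf.fderiv_right (by rw [add_assoc]; rfl))
  exact (hfirst.fderiv_right le_rfl).clm_apply contDiff_const

theorem hasFDerivAt_ringInverse_fderiv_apply (hf : DifferentiableAt ℝ (fderiv ℝ f) x)
    (h1 : fderiv ℝ f x = 1) (i ν : Fin n) :
    HasFDerivAt (fun y => Ring.inverse (fderiv ℝ f y) (Pi.single ν 1) i)
      (-(matrixEntryCLM i ν).comp (fderiv ℝ (fderiv ℝ f) x)) x := by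
  exact (matrixEntryCLM i ν).hasFDerivAt.comp x (hf.hasFDerivAt.ringInverse_of_eq_one h1)

end Coordinates

theorem stmt10_general (n : ℕ) (ψ : Diffeo n)
    (hd : fderiv ℝ ψ.toFun 0 = ContinuousLinearMap.id ℝ (Fin n → ℝ))
    (i j k ℓ : Fin n) :
    fderiv ℝ (fun x => ∑ ν : Fin n,
        (jacobianM n ψ.toFun x)⁻¹ i ν * secondPartial n ψ.toFun ν j k x) 0
        (Pi.single ℓ 1)
      = fderiv ℝ (fun x => secondPartial n ψ.toFun i j k x) 0 (Pi.single ℓ 1)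
        - ∑ ν : Fin n,
            secondPartial n ψ.toFun i ℓ ν 0 * secondPartial n ψ.toFun ν j k 0 := by
  have hψ : ContDiff ℝ (1 + 2) ψ.toFun := ψ.smooth_toFun.of_le (WithTop.coe_le_coe.mpr le_top)
  have hψ' : DifferentiableAt ℝ (fderiv ℝ ψ.toFun) 0 :=
    (hψ.fderiv_right (m := 1) (by norm_num)).differentiable one_ne_zero 0
  have hd_one : fderiv ℝ ψ.toFun 0 = 1 := hd
  have hinvEntry := hasFDerivAt_ringInverse_fderiv_apply hψ' hd_one i
  have hsecond : ∀ ν, DifferentiableAt ℝ (secondPartial n ψ.toFun ν j k) 0 := fun ν =>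
    (hψ.secondPartial ν j k).differentiable one_ne_zero 0
  simp_rw [jacobianM_inv_apply (ψ.isUnit_fderiv _)]
  rw [(HasFDerivAt.fun_sum fun ν _ => (hinvEntry ν).fun_mul (hsecond ν).hasFDerivAt).fderiv]
  simp [hd_one, Pi.single_apply, secondPartial_eq_fderiv_fderiv hψ', Finset.sum_add_distrib,
    sub_eq_add_neg, mul_comm]

/-- For a diffeomorphism `ψ` of `ℝⁿ` with `ψ(0) = 0`, `Dψ(0) = Id`, the derivative at
`0` in the direction `e_ℓ` of `x ↦ Σ_ν (Dψ(x)⁻¹)^i_ν ∂ⱼ∂ₖψ^ν(x)` equals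
`∂_ℓ∂ⱼ∂ₖψ^i(0) − Σ_ν ∂_ℓ∂_νψ^i(0)·∂ⱼ∂ₖψ^ν(0)`;
in the paper's notation, `η^i_{jkℓ} = α^i_{jkℓ} − Σ_ν α^i_{ℓν}·α^ν_{jk}`. -/
theorem stmt10 (n : ℕ) (ψ : Diffeo n)
    (hz : ψ.toFun 0 = 0)
    (hd : fderiv ℝ ψ.toFun 0 = ContinuousLinearMap.id ℝ (Fin n → ℝ))
    (i j k ℓ : Fin n) :
    fderiv ℝ (fun x => ∑ ν : Fin n,
        (jacobianM n ψ.toFun x)⁻¹ i ν * secondPartial n ψ.toFun ν j k x) 0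
        (Pi.single ℓ 1)
      = fderiv ℝ (fun x => secondPartial n ψ.toFun i j k x) 0 (Pi.single ℓ 1)
        - ∑ ν : Fin n,
            secondPartial n ψ.toFun i ℓ ν 0 * secondPartial n ψ.toFun ν j k 0 :=
  stmt10_general n ψ hd i j k ℓ
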